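/- arXiv:1601.07466 — 7 statements merged into one kernel-verified Lean document; each statement's English description precedes it below -/
import Mathlib

section
/- For every partition λ, the sum of μ(δ) over all partition divisors δ of λ equals 1 if λ = ∅ and equals 0 otherwise. -/
/-!
Only squarefree divisors contribute, and the squarefree divisors of `λ` are exactly the subsets
of its set of distinct parts. The sum is therefore `∑_{t ⊆ S} (-1)^|t| = (1 - 1)^|S|`, which
vanishes unless `S = ∅`, i.e. unless `λ = ∅`.
-/

/-- The set of partition divisors (sub-partitions) of `l`. -/
def pdivisors (l : Multiset ℕ+) : Finset (Multiset ℕ+) := l.powerset.toFinset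

/-- Partition-theoretic Möbius function. -/
def pmu (l : Multiset ℕ+) : ℂ := if l.Nodup then (-1 : ℂ) ^ (Multiset.card l) else 0

/-- The "integer" of a partition: the product of its parts. -/
def nInt (l : Multiset ℕ+) : ℕ := (l.map (fun a => (a : ℕ))).prod

/-- Partition-theoretic phi function. -/
noncomputable def pphi (l : Multiset ℕ+) : ℂ :=
  (nInt l : ℂ) * ∏ a ∈ l.toFinset, (1 - (a : ℂ)⁻¹)

/-- Convert a `Nat.Partition n` to a multiset of positive integers. -/
def toPtn {n : ℕ} (p : n.Partition) : Multiset ℕ+ :=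
  p.parts.pmap (fun x hx => ⟨x, hx⟩) (fun _ hx => p.parts_pos hx)

/-- The partition function `p(n)`. -/
def partcount (n : ℕ) : ℕ := Fintype.card (Nat.Partition n)

/-- A partition lies in `P₌` iff it is nonempty with all parts equal. -/
def isPeq (l : Multiset ℕ+) : Prop :=
  ∃ (a : ℕ+) (k : ℕ), 0 < k ∧ l = Multiset.replicate k a

theorem filter_nodup_pdivisors (l : Multiset ℕ+) :
    (pdivisors l).filter Multiset.Nodup =
      l.toFinset.powerset.map ⟨Finset.val, Finset.val_injective⟩ := by
  ext δ
  simp only [Finset.mem_filter, pdivisors, Multiset.mem_toFinset, Multiset.mem_powerset,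
    Finset.mem_map, Finset.mem_powerset, Function.Embedding.coeFn_mk]
  constructor
  · rintro ⟨hle, hnodup⟩
    refine ⟨⟨δ, hnodup⟩, ?_, rfl⟩
    rw [← Finset.val_le_iff, Multiset.toFinset_val]
    exact Multiset.le_dedup.mpr ⟨hle, hnodup⟩
  · rintro ⟨t, hsub, rfl⟩
    rw [← Finset.val_le_iff, Multiset.toFinset_val] at hsub
    exact Multiset.le_dedup.mp hsub

theorem sum_pmu_pdivisors_eq_sum_powerset (l : Multiset ℕ+) :
    ∑ δ ∈ pdivisors l, pmu δ = ∑ t ∈ l.toFinset.powerset, (-1 : ℂ) ^ t.card := by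
  calc ∑ δ ∈ pdivisors l, pmu δ
      = ∑ δ ∈ (pdivisors l).filter Multiset.Nodup, (-1 : ℂ) ^ Multiset.card δ := by
        rw [Finset.sum_filter]; rfl
    _ = ∑ t ∈ l.toFinset.powerset, (-1 : ℂ) ^ t.card := by
        rw [filter_nodup_pdivisors, Finset.sum_map]; rfl

/-- The sum of the partition Möbius function over partition divisors of `λ` is `1` if
`λ = ∅` and `0` otherwise. -/
theorem pmu_sum_divisors (l : Multiset ℕ+) :
    (∑ δ ∈ pdivisors l, pmu δ) = if l = 0 then 1 else 0 := by
  have alternating_sum :=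
    congrArg (Int.cast : ℤ → ℂ) (Finset.sum_powerset_neg_one_pow_card (x := l.toFinset))
  push_cast at alternating_sum
  rw [sum_pmu_pdivisors_eq_sum_powerset, alternating_sum]
  simp only [Multiset.toFinset_eq_empty]
end

section
/- For functions f, F : P → ℂ, the following are equivalent: (i) F(λ) = ∑_{δ|λ} f(δ) for all partitions λ; (ii) f(λ) = ∑_{δ|λ} F(δ)·μ(λ/δ) for all partitions λ. (Partition-theoretic Möbius inversion.) -/
/-! Encode a function `f` on partitions by its generating series `∑ f(λ) x^λ` in the power series
ring `ℂ⟦x_a : a ∈ ℕ+⟧`, where `x^λ = ∏_{a ∈ λ} x_a`. Sums over sub-partitions are then coefficients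
of products: `∑_{δ | λ} f(δ) g(λ/δ)` is the coefficient of `x^λ` in `(∑ f x)(∑ g x)`. Hence (i)
reads `F = f ζ` and (ii) reads `f = F μ`, with `ζ = ∑ x^λ = ∏ (1 - x_a)⁻¹` and
`μ = ∑ μ(λ) x^λ = ∏ (1 - x_a)`. These are equivalent because `μ ζ = 1`, i.e.
`∑_{δ | λ} μ(δ) = 0` for `λ ≠ ∅`: only the squarefree `δ` count, and these are the subsets of
the set of distinct parts of `λ`. -/

open Finset MvPowerSeries

section

variable {σ : Type*} [DecidableEq σ]

namespace Multiset

lemma sum_antidiagonal_toFinsupp {M : Type*} [AddCommMonoid M] (s : Multiset σ)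
    (g : (σ →₀ ℕ) × (σ →₀ ℕ) → M) :
    ∑ p ∈ HasAntidiagonal.antidiagonal (toFinsupp s), g p =
      ∑ t ∈ s.powerset.toFinset, g (toFinsupp t, toFinsupp (s - t)) := by
  symm
  refine sum_nbij' (fun t => (toFinsupp t, toFinsupp (s - t)))
    (fun p => Finsupp.toMultiset p.1) ?_ ?_ ?_ ?_ fun _ _ => rfl
  · intro t ht
    rw [mem_toFinset, mem_powerset] at ht
    rw [HasAntidiagonal.mem_antidiagonal, ← toFinsupp_add, add_tsub_cancel_of_le ht]
  · rintro ⟨p, q⟩ h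
    rw [HasAntidiagonal.mem_antidiagonal] at h
    rw [mem_toFinset, mem_powerset, ← toFinsupp_toMultiset s, ← h, Finsupp.toMultiset_add]
    exact le_add_right _ _
  · intro t _
    simp
  · rintro ⟨p, q⟩ h
    rw [HasAntidiagonal.mem_antidiagonal] at h
    rw [← toFinsupp_toMultiset s, ← h, Finsupp.toMultiset_add]
    simp

lemma filter_nodup_toFinset_powerset (s : Multiset σ) :
    s.powerset.toFinset.filter Nodup =
      s.toFinset.powerset.map ⟨Finset.val, Finset.val_injective⟩ := by
  ext t
  simp only [Finset.mem_filter, mem_toFinset, mem_powerset, Finset.mem_map, Finset.mem_powerset,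
    Function.Embedding.coeFn_mk]
  constructor
  · rintro ⟨hle, hnd⟩
    exact ⟨⟨t, hnd⟩, fun a ha => mem_toFinset.2 (mem_of_le hle ha), rfl⟩
  · rintro ⟨S, hS, rfl⟩
    exact ⟨(le_iff_subset S.nodup).2 fun a ha => by simpa using hS ha, S.nodup⟩

end Multiset

namespace MvPowerSeries

variable {R : Type*} [Semiring R]

noncomputable def ofMultisetFun (f : Multiset σ → R) : MvPowerSeries σ R :=
  fun n => f (Finsupp.toMultiset n)

lemma coeff_toFinsupp_ofMultisetFun (f : Multiset σ → R) (s : Multiset σ) :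
    coeff (Multiset.toFinsupp s) (ofMultisetFun f) = f s :=
  congrArg f (Multiset.toFinsupp_toMultiset s)

lemma coeff_toFinsupp_ofMultisetFun_mul (f g : Multiset σ → R) (s : Multiset σ) :
    coeff (Multiset.toFinsupp s) (ofMultisetFun f * ofMultisetFun g) =
      ∑ t ∈ s.powerset.toFinset, f t * g (s - t) := by
  rw [coeff_mul, Multiset.sum_antidiagonal_toFinsupp]
  simp only [coeff_toFinsupp_ofMultisetFun]

lemma ofMultisetFun_eq_mul_iff (f g h : Multiset σ → R) :
    ofMultisetFun h = ofMultisetFun f * ofMultisetFun g ↔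
      ∀ s, h s = ∑ t ∈ s.powerset.toFinset, f t * g (s - t) := by
  simp only [MvPowerSeries.ext_iff, Multiset.toFinsupp.surjective.forall,
    coeff_toFinsupp_ofMultisetFun_mul, coeff_toFinsupp_ofMultisetFun]

end MvPowerSeries

end

lemma sum_pdivisors_pmu (l : Multiset ℕ+) :
    ∑ δ ∈ pdivisors l, pmu δ = if l = 0 then 1 else 0 :=
  calc ∑ δ ∈ pdivisors l, pmu δ = ∑ S ∈ l.toFinset.powerset, (-1 : ℂ) ^ #S := by
        rw [pdivisors]
        simp only [pmu]
        rw [← sum_filter, Multiset.filter_nodup_toFinset_powerset, sum_map]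
        rfl
    _ = ((∑ S ∈ l.toFinset.powerset, (-1 : ℤ) ^ #S : ℤ) : ℂ) := by push_cast; rfl
    _ = if l = 0 then 1 else 0 := by
        rw [sum_powerset_neg_one_pow_card]
        simp [Multiset.toFinset_eq_empty]

lemma ofMultisetFun_pmu_mul_one :
    ofMultisetFun pmu * ofMultisetFun 1 = (1 : MvPowerSeries ℕ+ ℂ) := by
  ext n
  obtain ⟨l, rfl⟩ := Multiset.toFinsupp.surjective n
  rw [coeff_toFinsupp_ofMultisetFun_mul, coeff_one]
  simpa [pdivisors] using sum_pdivisors_pmu l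

/-- Partition-theoretic Möbius inversion: `F(λ) = ∑_{δ|λ} f(δ)` for all partitions `λ`
iff `f(λ) = ∑_{δ|λ} F(δ)·μ(λ/δ)` for all partitions `λ`. -/
theorem partition_moebius_inversion (f F : Multiset ℕ+ → ℂ) :
    (∀ l : Multiset ℕ+, F l = ∑ δ ∈ pdivisors l, f δ) ↔
      (∀ l : Multiset ℕ+, f l = ∑ δ ∈ pdivisors l, F δ * pmu (l - δ)) := by
  have hμζ := ofMultisetFun_pmu_mul_one
  calc (∀ l, F l = ∑ δ ∈ pdivisors l, f δ)
        ↔ ofMultisetFun F = ofMultisetFun f * ofMultisetFun 1 := by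
          simp only [ofMultisetFun_eq_mul_iff, Pi.one_apply, mul_one, pdivisors]
    _ ↔ ofMultisetFun f = ofMultisetFun F * ofMultisetFun pmu := by
          constructor <;> intro h <;> rw [h, mul_assoc]
          · rw [mul_comm (ofMultisetFun 1), hμζ, mul_one]
          · rw [hμζ, mul_one]
    _ ↔ _ := ofMultisetFun_eq_mul_iff F pmu f
end

section
/- For every partition λ, ∑_{δ|λ} φ(δ) = n_λ, where the sum is over all partition divisors δ of λ. -/
/-!
φ is multiplicative on partitions with no common part, and φ(a^k) = a^k − a^(k−1) for k ≥ 1.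
Writing λ = a^m · t with a ∤ t, every divisor of λ is uniquely a^k · s with k ≤ m and s ∣ t, so
the divisor sum factors as (∑_{k ≤ m} φ(a^k)) · ∑_{s ∣ t} φ(s) = a^m · n_t by telescoping and
induction on t.
-/

open Multiset Finset

lemma mem_pdivisors {δ l : Multiset ℕ+} : δ ∈ pdivisors l ↔ δ ≤ l := by
  simp [pdivisors]

lemma nInt_add (s t : Multiset ℕ+) : nInt (s + t) = nInt s * nInt t := by
  simp [nInt]

lemma nInt_replicate (k : ℕ) (a : ℕ+) : nInt (replicate k a) = (a : ℕ) ^ k := by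
  simp [nInt]

lemma pphi_zero : pphi 0 = 1 := by
  simp [pphi, nInt]

lemma pphi_add_of_disjoint {s t : Multiset ℕ+} (h : Disjoint s t) :
    pphi (s + t) = pphi s * pphi t := by
  rw [pphi, pphi, pphi, nInt_add, Multiset.toFinset_add,
    Finset.prod_union (Multiset.disjoint_toFinset.2 h)]
  push_cast
  ring

lemma pphi_replicate_succ (k : ℕ) (a : ℕ+) :
    pphi (replicate (k + 1) a) = (a : ℂ) ^ (k + 1) - (a : ℂ) ^ k := by
  have ha : (a : ℂ) ≠ 0 := by exact_mod_cast a.ne_zero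
  simp only [pphi, nInt_replicate, Multiset.toFinset_replicate, Nat.add_one_ne_zero,
    if_false, Finset.prod_singleton]
  push_cast
  field_simp
  ring

lemma sum_range_pphi_replicate (m : ℕ) (a : ℕ+) :
    ∑ k ∈ range (m + 1), pphi (replicate k a) = (a : ℂ) ^ m := by
  induction m with
  | zero => simp [pphi_zero]
  | succ m ih => rw [Finset.sum_range_succ, ih, pphi_replicate_succ]; ring

lemma replicate_count_add_filter_ne {α : Type*} [DecidableEq α] (s : Multiset α) (a : α) :
    replicate (count a s) a + s.filter (· ≠ a) = s := by
  rw [← filter_eq' s a]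
  exact filter_add_not _ s

lemma disjoint_replicate_of_notMem {α : Type*} (k : ℕ) {a : α} {s : Multiset α} (ha : a ∉ s) :
    Disjoint (replicate k a) s :=
  disjoint_left.2 fun hb => eq_of_mem_replicate hb ▸ ha

lemma filter_ne_replicate_add {α : Type*} [DecidableEq α] (k : ℕ) {a : α} {s : Multiset α}
    (ha : a ∉ s) : (replicate k a + s).filter (· ≠ a) = s := by
  rw [filter_add, filter_eq_nil.2 fun b hb => not_not.2 (eq_of_mem_replicate hb),
    filter_eq_self.2 fun b hb => ne_of_mem_of_not_mem hb ha, zero_add]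

lemma sum_pdivisors_replicate_add {M : Type*} [AddCommMonoid M] (f : Multiset ℕ+ → M)
    (m : ℕ) {a : ℕ+} {t : Multiset ℕ+} (ha : a ∉ t) :
    ∑ δ ∈ pdivisors (replicate m a + t), f δ =
      ∑ k ∈ range (m + 1), ∑ s ∈ pdivisors t, f (replicate k a + s) := by
  have notMem_of_le {s : Multiset ℕ+} (hs : s ≤ t) : a ∉ s := fun h => ha (mem_of_le hs h)
  rw [← Finset.sum_product']
  refine Finset.sum_nbij' (fun δ => (count a δ, δ.filter (· ≠ a)))
    (fun p => replicate p.1 a + p.2) ?_ ?_ ?_ ?_ ?_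
  · intro δ hδ
    simp only [mem_pdivisors, Finset.mem_product, Finset.mem_range] at hδ ⊢
    constructor
    · simpa [Nat.lt_succ_iff, count_eq_zero.2 ha] using count_le_of_le a hδ
    · simpa only [filter_ne_replicate_add m ha] using filter_le_filter (· ≠ a) hδ
  · rintro ⟨k, s⟩ hks
    simp only [mem_pdivisors, Finset.mem_product, Finset.mem_range] at hks ⊢
    exact add_le_add (replicate_le_replicate a |>.2 (by omega)) hks.2
  · intro δ _
    exact replicate_count_add_filter_ne δ a
  · rintro ⟨k, s⟩ hks
    simp only [mem_pdivisors, Finset.mem_product] at hks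
    simp [count_eq_zero.2 (notMem_of_le hks.2), filter_ne_replicate_add k (notMem_of_le hks.2)]
  · intro δ _
    rw [replicate_count_add_filter_ne]

/-- For every partition `λ`, `∑_{δ|λ} φ(δ) = n_λ`. -/
theorem pphi_sum_divisors (l : Multiset ℕ+) :
    (∑ δ ∈ pdivisors l, pphi δ) = (nInt l : ℂ) := by
  induction l using Multiset.strongInductionOn with
  | ih l ih =>
  rcases l.empty_or_exists_mem with rfl | ⟨a, hal⟩
  · simp [pdivisors, pphi_zero, nInt]
  set t := l.filter (· ≠ a)
  have hat : a ∉ t := by simp [t]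
  have htl : t < l := lt_of_le_of_ne (filter_le _ l) fun h => hat (h ▸ hal)
  rw [← replicate_count_add_filter_ne l a, sum_pdivisors_replicate_add _ _ hat]
  calc ∑ k ∈ range (count a l + 1), ∑ s ∈ pdivisors t, pphi (replicate k a + s)
      = (∑ k ∈ range (count a l + 1), pphi (replicate k a)) * ∑ s ∈ pdivisors t, pphi s := by
        rw [Finset.sum_mul_sum]
        refine Finset.sum_congr rfl fun k _ => Finset.sum_congr rfl fun s hs => ?_
        exact pphi_add_of_disjoint <| disjoint_replicate_of_notMem k
          fun has => hat (mem_of_le (mem_pdivisors.1 hs) has)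
    _ = nInt (replicate (count a l) a + t) := by
        rw [sum_range_pphi_replicate, ih t htl, nInt_add, nInt_replicate]
        norm_cast
end

section
/- For every partition λ, φ(λ) = n_λ · ∑_{δ|λ} μ(δ)/n_δ, where the sum is over all partition divisors δ of λ. -/
theorem Multiset.sum_powerset_toFinset_eq_sum_toFinset_powerset {α M : Type*} [DecidableEq α]
    [AddCommMonoid M] (s : Multiset α) (f : Multiset α → M) (hf : ∀ δ, ¬δ.Nodup → f δ = 0) :
    ∑ δ ∈ s.powerset.toFinset, f δ = ∑ t ∈ s.toFinset.powerset, f t.val := by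
  refine (Finset.sum_subset ?_ ?_).symm.trans
    (Finset.sum_map _ ⟨Finset.val, Finset.val_injective⟩ f)
  · intro δ hδ
    obtain ⟨t, ht, rfl⟩ := Finset.mem_map.1 hδ
    rw [Multiset.mem_toFinset, Multiset.mem_powerset]
    exact (Finset.val_le_iff.2 (Finset.mem_powerset.1 ht)).trans (Multiset.dedup_le s)
  · intro δ hδ hδt
    refine hf δ fun hnd => hδt (Finset.mem_map.2 ⟨⟨δ, hnd⟩, ?_, rfl⟩)
    rw [Multiset.mem_toFinset, Multiset.mem_powerset] at hδ
    exact Finset.mem_powerset.2 fun a ha => Multiset.mem_toFinset.2 (Multiset.mem_of_le hδ ha)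

theorem nInt_cast (l : Multiset ℕ+) : (nInt l : ℂ) = (l.map fun a : ℕ+ => (a : ℂ)).prod := by
  -- `nInt` elaborates with `l` coerced to `Multiset ℕ` through the `Multiset` monad.
  simp [nInt, Nat.cast_multiset_prod, Multiset.map_map, Bind.bind]

theorem pmu_div_nInt (t : Finset ℕ+) : pmu t.val / nInt t.val = ∏ a ∈ t, -(a : ℂ)⁻¹ := by
  rw [pmu, if_pos t.nodup, nInt_cast, Finset.prod_neg, Finset.prod_inv_distrib, div_eq_mul_inv]
  rfl

/-- For every partition `λ`, `φ(λ) = n_λ · ∑_{δ|λ} μ(δ)/n_δ`. -/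
theorem pphi_eq_moebius_sum (l : Multiset ℕ+) :
    pphi l = (nInt l : ℂ) * ∑ δ ∈ pdivisors l, pmu δ / (nInt δ : ℂ) := by
  have hpmu : ∀ δ, ¬δ.Nodup → pmu δ / nInt δ = 0 := fun δ h => by simp [pmu, h]
  rw [pphi, pdivisors, Multiset.sum_powerset_toFinset_eq_sum_toFinset_powerset l _ hpmu]
  simp only [pmu_div_nInt, sub_eq_add_neg, Finset.prod_one_add]
end

section
/- Let f : ℤ⁺ → ℂ and set c_n := ∑_{d|n} f(d) for n ≥ 1 and c_0 := 0. Define F(λ) := ∑_{δ|λ, δ∈P₌} f(ℓ(δ)), the sum over partition divisors of λ that lie in P₌. Then ⟨F⟩_q = ∑_{n≥0} c_n qⁿ; equivalently, for every integer n ≥ 0, ∑_{λ⊢n} F(λ) = ∑_{k=0}^{n} c_k · p(n−k). -/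
open scoped Classical

/-! Removing a sub-partition `δ ⊢ m` from `λ ⊢ n` leaves a partition of `n - m`, so summing
`∑_{δ | λ} g δ` over `λ ⊢ n` gives `∑_m p(n - m) ∑_{δ ⊢ m} g δ`; that is,
`⟨∑_{δ | ·} g δ⟩_q = ∑_δ g δ q^{|δ|}`. For `g δ = [δ ∈ P₌] f(ℓ(δ))` the inner sum is `c_m`,
because the partitions of `m` in `P₌` are exactly the `d`-fold repetitions of `m / d`, `d ∣ m`. -/

namespace Nat.Partition

def partitionWithSubmultisetEquiv {n : ℕ} {s : Multiset ℕ} (hs : ∀ a ∈ s, 0 < a)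
    (hsn : s.sum ≤ n) : {p : n.Partition // s ≤ p.parts} ≃ (n - s.sum).Partition where
  toFun p :=
    ⟨p.1.parts - s, fun hi => p.1.parts_pos (Multiset.mem_of_le (Multiset.sub_le_self _ _) hi), by
      have h := congrArg Multiset.sum (tsub_add_cancel_of_le p.2)
      rw [Multiset.sum_add, p.1.parts_sum] at h
      omega⟩
  invFun q :=
    ⟨⟨q.parts + s, fun hi => (Multiset.mem_add.1 hi).elim q.parts_pos (hs _), by
      rw [Multiset.sum_add, q.parts_sum]; omega⟩, Multiset.le_add_left _ _⟩
  left_inv p := Subtype.ext <| Partition.ext <| tsub_add_cancel_of_le p.2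
  right_inv q := Partition.ext <| add_tsub_cancel_right _ _

theorem le_of_parts_le {m n : ℕ} {q : m.Partition} {p : n.Partition} (h : q.parts ≤ p.parts) :
    m ≤ n := by
  have hsum := congrArg Multiset.sum (tsub_add_cancel_of_le h)
  rw [Multiset.sum_add, q.parts_sum, p.parts_sum] at hsum
  omega

end Nat.Partition

theorem Nat.div_pos_of_mem_divisors {d m : ℕ} (hd : d ∈ m.divisors) : 0 < m / d :=
  Nat.div_pos (Nat.divisor_le hd) (Nat.pos_of_mem_divisors hd)

open Finset

theorem card_filter_parts_le {m n : ℕ} (q : m.Partition) (hmn : m ≤ n) :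
    #{p : n.Partition | q.parts ≤ p.parts} = partcount (n - m) := by
  have e := Nat.Partition.partitionWithSubmultisetEquiv (fun _ => q.parts_pos) (q.parts_sum ▸ hmn)
  rw [q.parts_sum] at e
  rw [partcount, ← Fintype.card_subtype]
  exact Fintype.card_congr e

theorem map_toPtn {n : ℕ} (p : n.Partition) : (toPtn p).map (↑) = p.parts :=
  (Multiset.map_pmap ..).trans ((Multiset.pmap_eq_map ..).trans (Multiset.map_id _))

theorem card_toPtn {n : ℕ} (p : n.Partition) : Multiset.card (toPtn p) = Multiset.card p.parts :=
  Multiset.card_pmap ..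

theorem map_coe_le_map_coe_iff {s t : Multiset ℕ+} : s.map (↑) ≤ t.map ((↑) : ℕ+ → ℕ) ↔ s ≤ t :=
  Multiset.map_le_map_iff PNat.coe_injective

theorem toPtn_le_toPtn_iff {m n : ℕ} {q : m.Partition} {p : n.Partition} :
    toPtn q ≤ toPtn p ↔ q.parts ≤ p.parts := by
  rw [← map_coe_le_map_coe_iff, map_toPtn, map_toPtn]

theorem toPtn_ofMultiset (δ : Multiset ℕ+) :
    toPtn (Nat.Partition.ofMultiset (δ.map (↑))) = δ := by
  refine Multiset.map_injective PNat.coe_injective ?_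
  rw [map_toPtn, Nat.Partition.ofMultiset_parts, Multiset.filter_eq_self]
  simp

theorem toPtn_sigma_injective :
    Function.Injective fun x : (Σ m : ℕ, m.Partition) => toPtn x.2 := by
  rintro ⟨m, q⟩ ⟨m', q'⟩ h
  have hparts : q.parts = q'.parts := by
    simpa only [map_toPtn] using congrArg (Multiset.map ((↑) : ℕ+ → ℕ)) h
  have hm : m = m' := by rw [← q.parts_sum, ← q'.parts_sum, hparts]
  subst hm
  rw [Nat.Partition.ext hparts]

theorem sum_partition_sum_pdivisors {M : Type*} [AddCommMonoid M] (g : Multiset ℕ+ → M) (n : ℕ) :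
    ∑ p : n.Partition, ∑ δ ∈ pdivisors (toPtn p), g δ
      = ∑ m ∈ range (n + 1), partcount (n - m) • ∑ q : m.Partition, g (toPtn q) := by
  set S := (range (n + 1)).sigma fun m => (univ : Finset m.Partition)
  have hdiv (p : n.Partition) :
      pdivisors (toPtn p) = {x ∈ S | x.2.parts ≤ p.parts}.image fun x => toPtn x.2 := by
    ext δ
    simp only [pdivisors, Multiset.mem_toFinset, Multiset.mem_powerset, mem_image, mem_filter]
    constructor
    · intro hδ
      rw [← toPtn_ofMultiset δ, toPtn_le_toPtn_iff] at hδ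
      refine ⟨⟨_, _⟩, ⟨?_, hδ⟩, toPtn_ofMultiset δ⟩
      simpa [S, Nat.lt_succ_iff] using Nat.Partition.le_of_parts_le hδ
    · rintro ⟨x, ⟨-, hx⟩, rfl⟩
      exact toPtn_le_toPtn_iff.2 hx
  calc ∑ p : n.Partition, ∑ δ ∈ pdivisors (toPtn p), g δ
      = ∑ p : n.Partition, ∑ x ∈ S, if x.2.parts ≤ p.parts then g (toPtn x.2) else 0 := by
        refine sum_congr rfl fun p _ => ?_
        rw [hdiv, sum_image (toPtn_sigma_injective.injOn), sum_filter]
    _ = ∑ x ∈ S, #{p : n.Partition | x.2.parts ≤ p.parts} • g (toPtn x.2) := by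
        rw [sum_comm]
        exact sum_congr rfl fun x _ => by rw [← sum_filter, sum_const]
    _ = ∑ x ∈ S, partcount (n - x.1) • g (toPtn x.2) := by
        refine sum_congr rfl fun x hx => ?_
        rw [card_filter_parts_le x.2 (Nat.lt_succ_iff.1 (mem_range.1 (mem_sigma.1 hx).1))]
    _ = _ := by
        rw [sum_sigma]
        simp only [smul_sum]

theorem isPeq_toPtn_iff {m : ℕ} (q : m.Partition) :
    isPeq (toPtn q) ↔ ∃ d ∈ m.divisors, q.parts = Multiset.replicate d (m / d) := by
  constructor
  · rintro ⟨a, k, hk, h⟩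
    have hparts : q.parts = Multiset.replicate k (a : ℕ) := by
      rw [← map_toPtn, h, Multiset.map_replicate]
    have hm : m = k * a := by rw [← q.parts_sum, hparts, Multiset.sum_replicate, smul_eq_mul]
    refine ⟨k, Nat.mem_divisors.2 ⟨⟨a, hm⟩, hm ▸ (Nat.mul_pos hk a.pos).ne'⟩, ?_⟩
    rw [hparts, hm, Nat.mul_div_cancel_left _ hk]
  · rintro ⟨d, hd, h⟩
    refine ⟨(m / d).toPNat (Nat.div_pos_of_mem_divisors hd), d, Nat.pos_of_mem_divisors hd, ?_⟩
    refine Multiset.map_injective PNat.coe_injective ?_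
    rw [map_toPtn, h, Multiset.map_replicate]
    rfl

theorem sum_partition_isPeq {M : Type*} [AddCommMonoid M] (f : ℕ → M) (m : ℕ) :
    ∑ q : m.Partition, (if isPeq (toPtn q) then f (Multiset.card (toPtn q)) else 0)
      = ∑ d ∈ m.divisors, f d := by
  rw [← sum_filter]
  refine sum_bij (fun q _ => Multiset.card (toPtn q)) ?_ ?_ ?_ fun _ _ => rfl
  · intro q hq
    obtain ⟨d, hd, h⟩ := (isPeq_toPtn_iff q).1 (mem_filter.1 hq).2
    rwa [card_toPtn, h, Multiset.card_replicate]
  · intro q hq q' hq' hcard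
    obtain ⟨d, -, h⟩ := (isPeq_toPtn_iff q).1 (mem_filter.1 hq).2
    obtain ⟨d', -, h'⟩ := (isPeq_toPtn_iff q').1 (mem_filter.1 hq').2
    rw [card_toPtn, card_toPtn, h, h', Multiset.card_replicate, Multiset.card_replicate] at hcard
    exact Nat.Partition.ext (by rw [h, h', hcard])
  · intro d hd
    let q : m.Partition :=
      ⟨Multiset.replicate d (m / d),
        fun hi => Multiset.eq_of_mem_replicate hi ▸ Nat.div_pos_of_mem_divisors hd, by
        rw [Multiset.sum_replicate, smul_eq_mul, Nat.mul_div_cancel' (Nat.dvd_of_mem_divisors hd)]⟩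
    exact ⟨q, mem_filter.2 ⟨mem_univ q, (isPeq_toPtn_iff q).2 ⟨d, hd, rfl⟩⟩,
      by rw [card_toPtn, Multiset.card_replicate]⟩

/-- Let `c_n := ∑_{d|n} f(d)` for `n ≥ 1` and `c_0 := 0`, and let
`F(λ) := ∑_{δ|λ, δ∈P₌} f(ℓ(δ))`. Then `⟨F⟩_q = ∑_{n≥0} c_n qⁿ`: in graded form, for every
`n ≥ 0`, `∑_{λ⊢n} F(λ) = ∑_{k=0}^{n} c_k·p(n−k)`. -/
theorem qbracket_of_divisor_coefficients (f : ℕ → ℂ) (c : ℕ → ℂ)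
    (hc0 : c 0 = 0) (hc : ∀ n : ℕ, 1 ≤ n → c n = ∑ d ∈ n.divisors, f d)
    (F : Multiset ℕ+ → ℂ)
    (hF : ∀ l : Multiset ℕ+,
      F l = ∑ δ ∈ pdivisors l, if isPeq δ then f (Multiset.card δ) else 0)
    (n : ℕ) :
    (∑ p : n.Partition, F (toPtn p))
      = ∑ k ∈ Finset.range (n + 1), c k * (partcount (n - k) : ℂ) := by
  have hc' (k : ℕ) : c k = ∑ d ∈ k.divisors, f d := by
    rcases Nat.eq_zero_or_pos k with rfl | hk
    · rw [hc0, Nat.divisors_zero, sum_empty]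
    · exact hc k hk
  simp only [hF, sum_partition_sum_pdivisors, sum_partition_isPeq, ← hc', nsmul_eq_mul]
  exact sum_congr rfl fun k _ => mul_comm _ _
end

section
/- Let (c_n)_{n≥1} be an arbitrary sequence of complex numbers. Then: (i) for every n ≥ 1, c_n = ∑_{λ⊢n, λ∈P₌} ∑_{d|ℓ(λ)} c_d · μ(ℓ(λ)/d), where μ is the classical Möbius function; and (ii) the function F(λ) := ∑_{δ|λ, δ∈P₌} ∑_{d|ℓ(δ)} c_d · μ(ℓ(δ)/d) satisfies ∑_{λ⊢n} F(λ) = ∑_{k=1}^{n} c_k · p(n−k) for every n ≥ 0, i.e., ⟨F⟩_q = ∑_{n≥1} c_n qⁿ. -/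
open scoped Classical

open Finset

def partSize (l : Multiset ℕ+) : ℕ := (l.map ((↑) : ℕ+ → ℕ)).sum

@[simp]
lemma partSize_add (l l' : Multiset ℕ+) : partSize (l + l') = partSize l + partSize l' := by
  simp [partSize]

@[simp]
lemma partSize_replicate (k : ℕ) (a : ℕ+) : partSize (Multiset.replicate k a) = k * a := by
  simp [partSize, Multiset.map_replicate]

@[simp]
lemma partSize_eq_zero {l : Multiset ℕ+} : partSize l = 0 ↔ l = 0 := by
  simp [partSize, Multiset.sum_eq_zero_iff, Multiset.eq_zero_iff_forall_notMem]

lemma map_coe_toPtn {n : ℕ} (p : n.Partition) : (toPtn p).map ((↑) : ℕ+ → ℕ) = p.parts := by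
  unfold toPtn
  exact (Multiset.map_pmap _ _ _ _).trans
    ((Multiset.pmap_eq_map _ (fun a => a) _ _).trans (Multiset.map_id _))

lemma toPtn_injective (n : ℕ) : Function.Injective (toPtn (n := n)) := fun p q h =>
  Nat.Partition.ext <| by rw [← map_coe_toPtn p, ← map_coe_toPtn q, h]

noncomputable def ptnFinset (n : ℕ) : Finset (Multiset ℕ+) := univ.image (toPtn (n := n))

lemma mem_ptnFinset {n : ℕ} {l : Multiset ℕ+} : l ∈ ptnFinset n ↔ partSize l = n := by
  constructor
  · intro hl
    obtain ⟨p, -, rfl⟩ := mem_image.mp hl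
    rw [partSize, map_coe_toPtn, p.parts_sum]
  · intro h
    refine mem_image.mpr ⟨⟨l.map ((↑) : ℕ+ → ℕ), ?_, h⟩, mem_univ _, ?_⟩
    · simp only [Multiset.mem_map]
      rintro _ ⟨a, -, rfl⟩
      exact a.pos
    · exact Multiset.map_injective PNat.coe_injective (map_coe_toPtn _)

lemma card_ptnFinset (n : ℕ) : #(ptnFinset n) = partcount n := by
  rw [ptnFinset, card_image_of_injective _ (toPtn_injective n), partcount, card_univ]

lemma sum_ptnFinset {M : Type*} [AddCommMonoid M] (n : ℕ) (f : Multiset ℕ+ → M) :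
    ∑ l ∈ ptnFinset n, f l = ∑ p : n.Partition, f (toPtn p) :=
  sum_image fun _ _ _ _ h => toPtn_injective n h

lemma card_filter_le_ptnFinset {m n : ℕ} {δ : Multiset ℕ+} (hδ : partSize δ = m)
    (hmn : m ≤ n) :
    #{l ∈ ptnFinset n | δ ≤ l} = partcount (n - m) := by
  rw [← card_ptnFinset]
  refine card_nbij' (fun l => l - δ) (fun ε => δ + ε) ?_ ?_ ?_ ?_
  · intro l hl
    simp only [mem_coe, mem_filter, mem_ptnFinset] at hl ⊢
    rw [← tsub_add_cancel_of_le hl.2, partSize_add] at hl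
    omega
  · intro ε hε
    simp only [mem_coe, mem_filter, mem_ptnFinset, partSize_add,
      Multiset.le_add_right, and_true] at hε ⊢
    omega
  · intro l hl
    exact add_tsub_cancel_of_le (mem_filter.mp hl).2
  · intro ε _
    exact add_tsub_cancel_left δ ε

lemma sum_ptnFinset_sum_pdivisors {M : Type*} [AddCommMonoid M] (n : ℕ)
    (f : Multiset ℕ+ → M) :
    ∑ l ∈ ptnFinset n, ∑ δ ∈ pdivisors l, f δ =
      ∑ m ∈ range (n + 1), partcount (n - m) • ∑ δ ∈ ptnFinset m, f δ := by
  have hswap : ∀ l δ, l ∈ ptnFinset n ∧ δ ∈ pdivisors l ↔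
      l ∈ {l ∈ ptnFinset n | δ ≤ l} ∧ δ ∈ (range (n + 1)).biUnion ptnFinset := by
    intro l δ
    simp only [pdivisors, Multiset.mem_toFinset, Multiset.mem_powerset, mem_filter, mem_biUnion,
      mem_range, mem_ptnFinset]
    constructor
    · rintro ⟨hl, hδl⟩
      refine ⟨⟨hl, hδl⟩, partSize δ, ?_, rfl⟩
      rw [← tsub_add_cancel_of_le hδl, partSize_add] at hl
      omega
    · exact fun ⟨h, _⟩ => h
  have hdisj : Set.PairwiseDisjoint ↑(range (n + 1)) ptnFinset := fun m _ m' _ hne =>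
    disjoint_left.mpr fun _ hm hm' => hne ((mem_ptnFinset.mp hm).symm.trans (mem_ptnFinset.mp hm'))
  rw [sum_comm' hswap, sum_biUnion hdisj]
  refine sum_congr rfl fun m hm => ?_
  rw [smul_sum]
  refine sum_congr rfl fun δ hδ => ?_
  rw [sum_const,
    card_filter_le_ptnFinset (mem_ptnFinset.mp hδ) (Nat.lt_succ_iff.mp (mem_range.mp hm))]

section Moebius

variable {R : Type*} [Ring R]

def convMoebius (c : ℕ → R) (k : ℕ) : R :=
  ∑ d ∈ k.divisors, c d * (ArithmeticFunction.moebius (k / d) : R)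

lemma sum_divisors_convMoebius (c : ℕ → R) {n : ℕ} (hn : 0 < n) :
    ∑ k ∈ n.divisors, convMoebius c k = c n := by
  refine ArithmeticFunction.sum_eq_iff_sum_mul_moebius_eq.mpr (fun m _ => ?_) n hn
  rw [Nat.sum_divisorsAntidiagonal' (f := fun x y => (ArithmeticFunction.moebius x : R) * c y)]
  exact sum_congr rfl fun d _ => (Int.cast_commute _ _).eq

end Moebius

lemma not_isPeq_zero : ¬ isPeq 0 := by
  rintro ⟨a, k, hk, h⟩
  exact hk.ne' (by simpa using congrArg Multiset.card h.symm)

lemma filter_isPeq_ptnFinset {n : ℕ} (hn : 0 < n) :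
    {l ∈ ptnFinset n | isPeq l} =
      n.divisors.image (fun k => Multiset.replicate k (n / k).toPNat') := by
  ext l
  simp only [mem_filter, mem_ptnFinset, mem_image, Nat.mem_divisors]
  constructor
  · rintro ⟨hl, a, k, hk, rfl⟩
    rw [partSize_replicate] at hl
    refine ⟨k, ⟨⟨a, hl.symm⟩, hn.ne'⟩, ?_⟩
    rw [← hl, Nat.mul_div_cancel_left _ hk, PNat.coe_toPNat']
  · rintro ⟨k, ⟨hkn, -⟩, rfl⟩
    have hk : 0 < k := Nat.pos_of_dvd_of_pos hkn hn
    refine ⟨?_, _, k, hk, rfl⟩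
    rw [partSize_replicate, PNat.toPNat'_coe (Nat.div_pos (Nat.le_of_dvd hn hkn) hk),
      Nat.mul_div_cancel' hkn]

/-- `F(λ) = ∑_{δ ∣ λ} peqWeight c δ`. -/
noncomputable def peqWeight (c : ℕ → ℂ) (l : Multiset ℕ+) : ℂ :=
  if isPeq l then convMoebius c (Multiset.card l) else 0

lemma sum_ptnFinset_peqWeight (c : ℕ → ℂ) (n : ℕ) :
    ∑ l ∈ ptnFinset n, peqWeight c l = if n = 0 then 0 else c n := by
  split_ifs with hn
  · refine sum_eq_zero fun l hl => if_neg ?_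
    rw [mem_ptnFinset, hn, partSize_eq_zero] at hl
    exact hl ▸ not_isPeq_zero
  · unfold peqWeight
    rw [← sum_filter, filter_isPeq_ptnFinset (Nat.pos_of_ne_zero hn), sum_image,
      ← sum_divisors_convMoebius c (Nat.pos_of_ne_zero hn)]
    · simp only [Multiset.card_replicate]
    · intro k _ k' _ h
      simpa using congrArg Multiset.card h

/-- For an arbitrary sequence `(c_n)_{n≥1}` of complex numbers:
(i) `c_n = ∑_{λ⊢n, λ∈P₌} ∑_{d|ℓ(λ)} c_d·μ(ℓ(λ)/d)` for every `n ≥ 1`, and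
(ii) `F(λ) := ∑_{δ|λ, δ∈P₌} ∑_{d|ℓ(δ)} c_d·μ(ℓ(δ)/d)` satisfies
`∑_{λ⊢n} F(λ) = ∑_{k=1}^{n} c_k·p(n−k)` for every `n ≥ 0`, i.e. `⟨F⟩_q = ∑_{n≥1} c_n qⁿ`. -/
theorem qbracket_arbitrary_coefficients (c : ℕ → ℂ) :
    (∀ n : ℕ, 1 ≤ n →
      c n = ∑ p : n.Partition,
        if isPeq (toPtn p) then
          ∑ d ∈ (Multiset.card (toPtn p)).divisors,
            c d * (ArithmeticFunction.moebius (Multiset.card (toPtn p) / d) : ℂ)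
        else 0) ∧
    (∀ n : ℕ,
      (∑ p : n.Partition, ∑ δ ∈ pdivisors (toPtn p),
        if isPeq δ then
          ∑ d ∈ (Multiset.card δ).divisors,
            c d * (ArithmeticFunction.moebius (Multiset.card δ / d) : ℂ)
        else 0)
      = ∑ k ∈ Finset.Icc 1 n, c k * (partcount (n - k) : ℂ)) := by
  refine ⟨fun n hn => ?_, fun n => ?_⟩
  · change c n = ∑ p : n.Partition, peqWeight c (toPtn p)
    rw [← sum_ptnFinset, sum_ptnFinset_peqWeight, if_neg (by omega)]
  · change ∑ p : n.Partition, ∑ δ ∈ pdivisors (toPtn p), peqWeight c δ = _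
    rw [← sum_ptnFinset n (fun l => ∑ δ ∈ pdivisors l, peqWeight c δ),
      sum_ptnFinset_sum_pdivisors,
      range_eq_Ico, sum_eq_sum_Ico_succ_bot (by omega : 0 < n + 1), Ico_add_one_right_eq_Icc]
    simp only [sum_ptnFinset_peqWeight, if_pos, nsmul_eq_mul, mul_zero, zero_add]
    refine sum_congr rfl fun k hk => ?_
    rw [if_neg (Nat.one_le_iff_ne_zero.mp (mem_Icc.mp hk).1), mul_comm]
end

section
/- Let f : ℤ⁺ → ℂ be such that the function (n,k) ↦ f(nk)·μ(n)/n is absolutely summable over ℤ⁺ × ℤ⁺, and define f̃(n) := ∑_{k≥1} f(nk). Then both series below converge absolutely and ∑_{n≥1} f(n)·φ(n)/n = ∑_{n≥1} f̃(n)·μ(n)/n, where φ is the classical Euler totient function and μ is the classical Möbius function. -/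
/-!
Möbius inversion of `∑_{d ∣ m} φ(d) = m` gives `∑_{d ∣ m} μ(d)/d = φ(m)/m`. Hence grouping the
absolutely convergent double series `∑_{n,k} f(nk)μ(n)/n` according to the product `m = nk`
yields the left-hand side, while summing it row by row yields the right-hand side. The row
`n = 1` is `∑ ‖f(k)‖`, which dominates the left-hand series since `φ(n) ≤ n`.
-/

open ArithmeticFunction ArithmeticFunction.Moebius

theorem sum_divisorsAntidiagonal_moebius_mul_eq_totient {R : Type*} [NonAssocRing R] {n : ℕ}
    (hn : n ≠ 0) :
    ∑ x ∈ n.divisorsAntidiagonal, (μ x.1 : R) * x.2 = n.totient := by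
  refine (sum_eq_iff_sum_mul_moebius_eq (f := fun m => (m.totient : R)) (g := fun m => (m : R))).mp
    (fun m _ => ?_) n (Nat.pos_of_ne_zero hn)
  rw [← Nat.cast_sum, Nat.sum_totient]

theorem sum_divisorsAntidiagonal_moebius_div_eq_totient_div {K : Type*} [Field K] [CharZero K]
    {n : ℕ} (hn : n ≠ 0) :
    ∑ x ∈ n.divisorsAntidiagonal, (μ x.1 : K) / x.1 = n.totient / n := by
  rw [← sum_divisorsAntidiagonal_moebius_mul_eq_totient hn, Finset.sum_div]
  refine Finset.sum_congr rfl fun x hx => ?_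
  obtain ⟨rfl, hx0⟩ := Nat.mem_divisorsAntidiagonal.mp hx
  have h1 : (x.1 : K) ≠ 0 := Nat.cast_ne_zero.mpr (left_ne_zero_of_mul hx0)
  have h2 : (x.2 : K) ≠ 0 := Nat.cast_ne_zero.mpr (right_ne_zero_of_mul hx0)
  push_cast
  field_simp

theorem sum_divisorsAntidiagonal_mul_moebius_div {K : Type*} [Field K] [CharZero K] (g : ℕ → K)
    {n : ℕ} (hn : n ≠ 0) :
    ∑ x ∈ n.divisorsAntidiagonal, g (x.1 * x.2) * μ x.1 / x.1 = g n * n.totient / n := by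
  rw [mul_div_assoc, ← sum_divisorsAntidiagonal_moebius_div_eq_totient_div hn, Finset.mul_sum]
  refine Finset.sum_congr rfl fun x hx => ?_
  rw [(Nat.mem_divisorsAntidiagonal.mp hx).1, mul_div_assoc]

theorem HasSum.sum_divisorsAntidiagonal {α : Type*} [AddCommMonoid α] [TopologicalSpace α]
    [ContinuousAdd α] [RegularSpace α] {F : ℕ → ℕ → α} {a : α}
    (hF : HasSum (fun p : ℕ+ × ℕ+ => F p.1 p.2) a) :
    HasSum (fun m : ℕ+ => ∑ x ∈ (m : ℕ).divisorsAntidiagonal, F x.1 x.2) a := by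
  refine (sigmaAntidiagonalEquivProd.hasSum_iff.mpr hF).sigma fun m => ?_
  rw [← Finset.sum_coe_sort]
  exact hasSum_fintype _

theorem norm_mul_totient_div_le {𝕜 : Type*} [RCLike 𝕜] (z : 𝕜) (n : ℕ) :
    ‖z * n.totient / n‖ ≤ ‖z‖ := by
  rw [mul_div_assoc, norm_mul]
  refine mul_le_of_le_one_right (norm_nonneg z) ?_
  rw [norm_div, RCLike.norm_natCast, RCLike.norm_natCast]
  exact div_le_one_of_le₀ (Nat.cast_le.mpr (Nat.totient_le n)) (Nat.cast_nonneg n)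

open ArithmeticFunction ArithmeticFunction.Moebius in
/-- If `(n,k) ↦ f(nk)·μ(n)/n` is absolutely summable over `ℤ⁺ × ℤ⁺`, then with
`f̃(n) := ∑_{k≥1} f(nk)`, both series converge absolutely and
`∑_{n≥1} f(n)φ(n)/n = ∑_{n≥1} f̃(n)μ(n)/n`, where `φ` is the Euler totient function
and `μ` is the classical Möbius function. -/
theorem totient_moebius_series (f : ℕ → ℂ)
    (h : Summable (fun p : ℕ+ × ℕ+ =>
      ‖f ((p.1 : ℕ) * (p.2 : ℕ)) * (μ (p.1 : ℕ) : ℂ) / ((p.1 : ℕ) : ℂ)‖)) :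
    Summable (fun n : ℕ+ =>
      ‖f (n : ℕ) * ((Nat.totient (n : ℕ)) : ℂ) / ((n : ℕ) : ℂ)‖) ∧
    Summable (fun n : ℕ+ =>
      ‖(∑' k : ℕ+, f ((n : ℕ) * (k : ℕ))) * (μ (n : ℕ) : ℂ) / ((n : ℕ) : ℂ)‖) ∧
    (∑' n : ℕ+, f (n : ℕ) * ((Nat.totient (n : ℕ)) : ℂ) / ((n : ℕ) : ℂ))
      = ∑' n : ℕ+, (∑' k : ℕ+, f ((n : ℕ) * (k : ℕ))) * (μ (n : ℕ) : ℂ) / ((n : ℕ) : ℂ) := by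
  set F : ℕ → ℕ → ℂ := fun a b => f (a * b) * μ a / a
  have hrow (n : ℕ+) : Summable fun k : ℕ+ => ‖F n k‖ := h.prod_factor n
  have hrowSum (n : ℕ+) : (∑' k : ℕ+, f (n * k)) * μ n / n = ∑' k : ℕ+, F n k := by
    rw [← tsum_mul_right, ← tsum_div_const]
  refine ⟨?_, ?_, ?_⟩
  · refine (hrow 1).of_nonneg_of_le (fun _ => norm_nonneg _) fun n => ?_
    simpa [F] using norm_mul_totient_div_le (f n) n
  · refine ((summable_prod_of_nonneg fun _ => norm_nonneg _).mp h).2.of_nonneg_of_le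
      (fun _ => norm_nonneg _) fun n => ?_
    rw [hrowSum]
    exact norm_tsum_le_tsum_norm (hrow n)
  · have hF : Summable fun p : ℕ+ × ℕ+ => F p.1 p.2 := h.of_norm
    calc ∑' m : ℕ+, f m * (m : ℕ).totient / m
        = ∑' m : ℕ+, ∑ x ∈ (m : ℕ).divisorsAntidiagonal, F x.1 x.2 :=
          tsum_congr fun m => (sum_divisorsAntidiagonal_mul_moebius_div f m.ne_zero).symm
      _ = ∑' p : ℕ+ × ℕ+, F p.1 p.2 := hF.hasSum.sum_divisorsAntidiagonal.tsum_eq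
      _ = ∑' (n : ℕ+) (k : ℕ+), F n k := hF.tsum_prod' fun n => (hrow n).of_norm
      _ = _ := tsum_congr fun n => (hrowSum n).symm
end
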